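/- arXiv:2309.02693 — 2 statements merged into one kernel-verified Lean document; each statement's English description precedes it below -/
import Mathlib

section
/- Let H be a subgroup of a finite group G and N a normal subgroup of G with gcd(|H|,|N|) = 1. If H covers or avoids every pd-chief factor of G, then HN/N covers or avoids every pd-chief factor of G/N. -/
/-- `A` covers the factor `K/L` if `K ≤ LA`. -/
def Covers {G : Type*} [Group G] (A K L : Subgroup G) : Prop := K ≤ L ⊔ A

/-- `A` avoids the factor `K/L` if `A ∩ K ≤ L`. -/
def Avoids {G : Type*} [Group G] (A K L : Subgroup G) : Prop := A ⊓ K ≤ L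

/-- `K/L` is a chief factor of `G`: both are normal, `L < K`, and there is no
normal subgroup of `G` strictly between `L` and `K`. -/
def IsChiefFactor {G : Type*} [Group G] (K L : Subgroup G) : Prop :=
  K.Normal ∧ L.Normal ∧ L < K ∧
    ∀ M : Subgroup G, M.Normal → L < M → M ≤ K → M = K

/-- `A` is a `p`-CAP-subgroup of `G`: it covers or avoids every `pd`-chief factor. -/
def IsPCAP {G : Type*} [Group G] (p : ℕ) (A : Subgroup G) : Prop :=
  ∀ K L : Subgroup G, IsChiefFactor K L → p ∣ Nat.card (K ⧸ L.subgroupOf K) →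
    Covers A K L ∨ Avoids A K L

/-- `H` is an `ICPC`-subgroup of `G` (for the prime `p`). -/
def IsICPC {G : Type*} [Group G] (p : ℕ) (H : Subgroup G) : Prop :=
  ∃ A : Subgroup G, A ≤ H ∧ IsPCAP p A ∧ H ⊓ ⁅H, (⊤ : Subgroup G)⁆ ≤ A

/-!
The full preimage in `G` of a chief factor of `G/N` is a chief factor of `G` of the same order.
Covering or avoiding that preimage passes to the image `HN/N`.
-/

section

open Subgroup

variable {G Q : Type*} [Group G] [Group Q] {f : G →* Q}

theorem Subgroup.lt_map_of_comap_lt {L : Subgroup Q} {M : Subgroup G}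
    (hf : Function.Surjective f) (hLM : L.comap f < M) : L < M.map f := by
  refine lt_of_le_of_ne ?_ fun hL ↦ hLM.ne ?_
  · simpa only [map_comap_eq_self_of_surjective hf] using map_mono (f := f) hLM.le
  · rw [hL, comap_map_eq, sup_of_le_left ((ker_le_comap f L).trans hLM.le)]

theorem IsChiefFactor.comap (hf : Function.Surjective f) {K L : Subgroup Q}
    (hKL : IsChiefFactor K L) : IsChiefFactor (K.comap f) (L.comap f) := by
  obtain ⟨hK, hL, hLK, hmax⟩ := hKL
  refine ⟨hK.comap f, hL.comap f, (comap_lt_comap_of_surjective hf).mpr hLK, ?_⟩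
  intro M hM hLM hMK
  have hker : f.ker ≤ M := (ker_le_comap f L).trans hLM.le
  have hmap : M.map f = K :=
    hmax _ (hM.map f hf) (lt_map_of_comap_lt hf hLM) (map_le_iff_le_comap.mpr hMK)
  rw [← hmap, comap_map_eq, sup_of_le_left hker]

theorem card_quotient_subgroupOf_comap (hf : Function.Surjective f) (K L : Subgroup Q) :
    Nat.card (K.comap f ⧸ (L.comap f).subgroupOf (K.comap f)) =
      Nat.card (K ⧸ L.subgroupOf K) := by
  change (L.comap f).relIndex (K.comap f) = L.relIndex K
  rw [relIndex_comap, map_comap_eq_self_of_surjective hf]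

theorem Covers.map_of_comap (hf : Function.Surjective f) {A : Subgroup G} {K L : Subgroup Q}
    (h : Covers A (K.comap f) (L.comap f)) : Covers (A.map f) K L :=
  calc K = (K.comap f).map f := (map_comap_eq_self_of_surjective hf K).symm
    _ ≤ (L.comap f ⊔ A).map f := map_mono h
    _ = L ⊔ A.map f := by rw [Subgroup.map_sup, map_comap_eq_self_of_surjective hf]

theorem Avoids.map_of_comap {A : Subgroup G} {K L : Subgroup Q}
    (h : Avoids A (K.comap f) (L.comap f)) : Avoids (A.map f) K L := by
  rintro _ ⟨⟨g, hgA, rfl⟩, hgK⟩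
  exact h ⟨hgA, hgK⟩

theorem IsPCAP.map_of_surjective {p : ℕ} {A : Subgroup G} (hA : IsPCAP p A)
    (hf : Function.Surjective f) : IsPCAP p (A.map f) := by
  intro K L hKL hp
  rw [← card_quotient_subgroupOf_comap hf] at hp
  exact (hA _ _ (hKL.comap hf) hp).imp (Covers.map_of_comap hf) Avoids.map_of_comap

end

theorem stmt_4_general {G : Type*} [Group G] (p : ℕ) (H N : Subgroup G)
    [N.Normal]
    (h : IsPCAP p H) :
    IsPCAP p (H.map (QuotientGroup.mk' N)) :=
  h.map_of_surjective (QuotientGroup.mk'_surjective N)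

theorem stmt_4 {G : Type*} [Group G] [Finite G] (p : ℕ) (H N : Subgroup G)
    [N.Normal] (hcop : Nat.Coprime (Nat.card H) (Nat.card N))
    (h : IsPCAP p H) :
    IsPCAP p (H.map (QuotientGroup.mk' N)) :=
  stmt_4_general p H N h
end

section
/- Let G be a finite group, H ≤ G, and N ⊴ G with gcd(|H|,|N|) = 1. Then HN ∩ [HN,G]N = (H ∩ [H,G])N. -/
/-!
Modulo `N`, the commutator `⁅HN, G⁆` agrees with `⁅H, G⁆`, so the left-hand side is
`HN ∩ ⁅H, G⁆N = (H ∩ ⁅H, G⁆N)N` by Dedekind's modular law. An element of `H ∩ ⁅H, G⁆N` maps to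
`G / ⁅H, G⁆` into the intersection of the images of `H` and `N`, whose orders are coprime, so it
lies in `⁅H, G⁆`.
-/

namespace Subgroup

variable {G : Type*} [Group G]

instance normal_commutator_top (H : Subgroup G) : (⁅H, (⊤ : Subgroup G)⁆ : Subgroup G).Normal :=
  normalizer_eq_top_iff.mp (top_le_iff.mp (normalizer_commutator_ge_right H ⊤))

theorem commutator_sup_ker_sup_ker {G' : Type*} [Group G'] (f : G →* G') (H K : Subgroup G) :
    ⁅H ⊔ f.ker, K⁆ ⊔ f.ker = ⁅H, K⁆ ⊔ f.ker := by
  rw [← comap_map_eq f ⁅H ⊔ f.ker, K⁆, ← comap_map_eq f ⁅H, K⁆, map_commutator, map_commutator,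
    map_sup, (map_eq_bot_iff _).mpr le_rfl, sup_bot_eq]

theorem commutator_sup_normal_sup (H K N : Subgroup G) [N.Normal] :
    ⁅H ⊔ N, K⁆ ⊔ N = ⁅H, K⁆ ⊔ N := by
  simpa only [QuotientGroup.ker_mk'] using commutator_sup_ker_sup_ker (QuotientGroup.mk' N) H K

theorem sup_normal_inf_of_le {H N X : Subgroup G} [N.Normal] (hNX : N ≤ X) :
    (H ⊔ N) ⊓ X = (H ⊓ X) ⊔ N := by
  apply SetLike.coe_injective
  rw [coe_inf, mul_normal, mul_normal, inf_comm H X, inf_mul_assoc X H N hNX, Set.inter_comm]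

theorem inf_sup_le_of_coprime {H K N : Subgroup G} [K.Normal]
    (hcop : Nat.Coprime (Nat.card H) (Nat.card N)) : H ⊓ (K ⊔ N) ≤ K := by
  set π := QuotientGroup.mk' K
  have hdisj : Disjoint (H.map π) (N.map π) := disjoint_of_coprime_natCard
    ((hcop.coprime_dvd_left (card_map_dvd H π)).coprime_dvd_right (card_map_dvd N π))
  have hKN : (K ⊔ N).map π = N.map π := by
    rw [map_sup, (map_eq_bot_iff _).mpr (QuotientGroup.ker_mk' K).ge, bot_sup_eq]
  have hbot : (H ⊓ (K ⊔ N)).map π = ⊥ :=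
    le_bot_iff.mp ((map_inf_le H (K ⊔ N) π).trans (hKN ▸ hdisj.le_bot))
  exact ((map_eq_bot_iff _).mp hbot).trans (QuotientGroup.ker_mk' K).le

end Subgroup

theorem stmt_6_general {G : Type*} [Group G] (H N : Subgroup G)
    [N.Normal] (hcop : Nat.Coprime (Nat.card H) (Nat.card N)) :
    (H ⊔ N) ⊓ (⁅H ⊔ N, (⊤ : Subgroup G)⁆ ⊔ N) =
      (H ⊓ ⁅H, (⊤ : Subgroup G)⁆) ⊔ N := by
  rw [Subgroup.commutator_sup_normal_sup, Subgroup.sup_normal_inf_of_le le_sup_right]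
  congr 1
  exact le_antisymm (le_inf inf_le_left (Subgroup.inf_sup_le_of_coprime hcop))
    (inf_le_inf_left H le_sup_left)

theorem stmt_6 {G : Type*} [Group G] [Finite G] (H N : Subgroup G)
    [N.Normal] (hcop : Nat.Coprime (Nat.card H) (Nat.card N)) :
    (H ⊔ N) ⊓ (⁅H ⊔ N, (⊤ : Subgroup G)⁆ ⊔ N) =
      (H ⊓ ⁅H, (⊤ : Subgroup G)⁆) ⊔ N :=
  stmt_6_general H N hcop
end
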